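/- arXiv:1211.0129 — 2 statements merged into one kernel-verified Lean document; each statement's English description precedes it below -/
import Mathlib

section
/- Let q ≥ 1 and h ≥ 1 be integers, and let β be a complex number that is algebraic of degree at most 2 over ℚ with |β| = √q. If β^{24h} = q^{12h}, then β^{24} = q^{12}. -/
/-!
Put `u = β² / q`. Then `u ∈ ℚ(β)` and `u ^ (12h) = 1`, so `u` is a root of unity, of some order `n`.
Its minimal polynomial over `ℚ` is the `n`-th cyclotomic polynomial, so `φ(n) ≤ [ℚ(β) : ℚ] ≤ 2`,
which forces `n ∣ 12`. Hence `u ^ 12 = 1`, i.e. `β ^ 24 = q ^ 12`.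
-/

open Module IntermediateField

namespace Nat

theorem prime_pow_dvd_twelve_of_totient_le_two {p k : ℕ} (hp : p.Prime) (h : φ (p ^ k) ≤ 2) :
    p ^ k ∣ 12 := by
  cases k with
  | zero => simp
  | succ k =>
    rw [totient_prime_pow_succ hp] at h
    have hpk : 1 ≤ p ^ k := one_le_pow _ _ hp.pos
    have hp3 : p ≤ 3 := le_add_of_sub_le ((Nat.le_mul_of_pos_left _ hpk).trans h)
    have hk2 : p ^ k ≤ 2 := (Nat.le_mul_of_pos_right _ (Nat.sub_pos_of_lt hp.one_lt)).trans h
    have hk1 : k ≤ 1 := by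
      by_contra! hk
      have : 2 ^ 2 ≤ p ^ k := pow_le_pow hp.two_le hp.one_le hk
      omega
    have hp2 := hp.two_le
    interval_cases p <;> interval_cases k <;> simp_all

theorem dvd_twelve_of_totient_le_two {n : ℕ} (hn : n ≠ 0) (h : φ n ≤ 2) : n ∣ 12 :=
  (dvd_iff_prime_pow_dvd_dvd 12 n).2 fun _ _ hp hpk =>
    prime_pow_dvd_twelve_of_totient_le_two hp
      ((le_of_dvd (totient_pos.2 (pos_of_ne_zero hn)) (totient_dvd_of_dvd hpk)).trans h)

end Nat

section RootsOfUnity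

variable {K : Type*} [Field K] [CharZero K] [FiniteDimensional ℚ K]

theorem IsPrimitiveRoot.totient_le_finrank_rat {ζ : K} {n : ℕ} (hζ : IsPrimitiveRoot ζ n)
    (hn : 0 < n) : n.totient ≤ finrank ℚ K := by
  rw [← Polynomial.natDegree_cyclotomic n ℚ, Polynomial.cyclotomic_eq_minpoly_rat hζ hn]
  exact minpoly.natDegree_le ζ

theorem pow_twelve_eq_one_of_finrank_rat_le_two (hK : finrank ℚ K ≤ 2) {ζ : K}
    (hζ : IsOfFinOrder ζ) : ζ ^ 12 = 1 := by
  have htot := (IsPrimitiveRoot.orderOf ζ).totient_le_finrank_rat hζ.orderOf_pos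
  exact orderOf_dvd_iff_pow_eq_one.1
    (Nat.dvd_twelve_of_totient_le_two hζ.orderOf_pos.ne' (htot.trans hK))

end RootsOfUnity

theorem pow_24_eq_of_pow_24h_eq_general (q h : ℕ) (hq : 1 ≤ q) (hh : 1 ≤ h) (β : ℂ)
    (halg : IsAlgebraic ℚ β)
    (hdeg : Module.finrank ℚ (IntermediateField.adjoin ℚ {β}) ≤ 2)
    (hpow : β ^ (24 * h) = (q : ℂ) ^ (12 * h)) :
    β ^ 24 = (q : ℂ) ^ 12 := by
  have hq0 : (q : ℂ) ≠ 0 := Nat.cast_ne_zero.2 (by omega)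
  have hfin : FiniteDimensional ℚ ℚ⟮β⟯ := adjoin.finiteDimensional halg.isIntegral
  have hu_mem : β ^ 2 / q ∈ ℚ⟮β⟯ :=
    div_mem (pow_mem (mem_adjoin_simple_self ℚ β) 2) (IntermediateField.natCast_mem _ q)
  set u : ℚ⟮β⟯ := ⟨β ^ 2 / q, hu_mem⟩
  have hu_pow : u ^ (12 * h) = 1 := by
    ext
    simp only [u, SubmonoidClass.coe_pow, IntermediateField.coe_one, div_pow, ← pow_mul]
    rw [← mul_assoc, show 2 * 12 = 24 by rfl, hpow, div_self (pow_ne_zero _ hq0)]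
  have hu12 : ((β ^ 2 / q) ^ 12 : ℂ) = 1 :=
    congrArg Subtype.val (pow_twelve_eq_one_of_finrank_rat_le_two hdeg
      (isOfFinOrder_iff_pow_eq_one.2 ⟨12 * h, by positivity, hu_pow⟩))
  rwa [div_pow, ← pow_mul, div_eq_one_iff_eq (pow_ne_zero _ hq0)] at hu12

/-- Let `q ≥ 1` and `h ≥ 1` be integers, and let `β` be a complex number that is algebraic of
degree at most `2` over `ℚ` with `|β| = √q`. If `β^(24h) = q^(12h)`, then `β^24 = q^12`. -/
theorem pow_24_eq_of_pow_24h_eq (q h : ℕ) (hq : 1 ≤ q) (hh : 1 ≤ h) (β : ℂ)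
    (halg : IsAlgebraic ℚ β)
    (hdeg : Module.finrank ℚ (IntermediateField.adjoin ℚ {β}) ≤ 2)
    (habs : ‖β‖ = Real.sqrt (q : ℝ))
    (hpow : β ^ (24 * h) = (q : ℂ) ^ (12 * h)) :
    β ^ 24 = (q : ℂ) ^ 12 :=
  pow_24_eq_of_pow_24h_eq_general q h hq hh β halg hdeg hpow
end

section
/- Let k be a number field of degree n over ℚ, Galois over ℚ, with a fixed embedding ι : k ↪ ℂ. Let 𝔮 be a nonzero prime ideal of 𝒪_k with absolute norm q := N(𝔮), let h ≥ 1 be an integer, let E ≥ 1 be a real number, and let α ∈ 𝒪_k be a nonzero element with 𝔮^h = α𝒪_k and ∏_{τ : k ↪ ℂ} max(1, |τ(α)|) ≤ |N_{k/ℚ}(α)| · E^n. Let a_σ ∈ {0, 8, 12, 16, 24} be integers for σ ∈ Gal(k/ℚ), let b be an integer with b² ≤ 4q, and let β ∈ ℂ satisfy β² + bβ + q = 0. Let F ⊆ ℂ be the subfield generated over ℚ by ι(k) and β. Then |N_{F/ℚ}(ι(∏_{σ ∈ Gal(k/ℚ)} σ(α)^{a_σ}) − β^{24h})| ≤ (q^{24h}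 E^{24n} + q^{12h})^{2n}. -/
/-!
Every `ℚ`-embedding `φ` of `F` into `ℂ` restricts to an embedding `ρ` of `k` and sends `β` to
another root `w` of `X² + bX + q`. Since `k` is Galois, `σ ↦ ρ ∘ σ` runs over all embeddings of
`k`, so `|ρ(∏ σ(α)^{a σ})| ≤ (∏_τ max(1, |τ α|))^24 ≤ (q^h E^n)^24`, while `b² ≤ 4q` forces
`|w|² = q`. Hence every conjugate of the element has absolute value at most
`C = q^{24h} E^{24n} + q^{12h}`, and its norm, the product of its `[F : ℚ] ≤ 2n` conjugates, is
at most `C^{2n}` because `C ≥ 1`.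
-/

open Module IntermediateField Polynomial

theorem Complex.norm_sq_eq_of_quadratic_root {b q : ℝ} (hb : b ^ 2 ≤ 4 * q) {w : ℂ}
    (hw : w ^ 2 + b * w + q = 0) : ‖w‖ ^ 2 = q := by
  have hre := congrArg Complex.re hw
  have him := congrArg Complex.im hw
  simp only [pow_two, add_re, add_im, mul_re, mul_im, ofReal_re, ofReal_im, zero_re,
    zero_im] at hre him
  have hvertex : b = -2 * w.re := by
    rcases mul_eq_zero.1 (by linarith : w.im * (2 * w.re + b) = 0) with hreal | hvertex
    · -- a real root of a quadratic with nonpositive discriminant is the double root `-b/2`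
      rw [hreal] at hre
      nlinarith [sq_nonneg (2 * w.re + b)]
    · linarith
  rw [Complex.sq_norm, Complex.normSq_apply]
  subst hvertex
  linarith

section AdjoinRangeUnionSingleton

variable {K L E : Type*} [Field K] [Field L] [Field E] [Algebra K L] [Algebra K E]

theorem AlgHom.adjoin_range_eq_fieldRange (ι : L →ₐ[K] E) :
    adjoin K (Set.range ι) = ι.fieldRange := by
  rw [← Set.image_univ, ← adjoin_map, adjoin_univ, AlgHom.fieldRange_eq_map]

theorem IntermediateField.finiteDimensional_adjoin_range_union_singleton [FiniteDimensional K L]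
    (ι : L →ₐ[K] E) {β : E} (hβ : IsIntegral K β) :
    FiniteDimensional K (adjoin K (Set.range ι ∪ {β})) := by
  have : FiniteDimensional K ι.fieldRange :=
    (AlgEquiv.ofInjectiveField ι).toLinearEquiv.finiteDimensional
  have := adjoin.finiteDimensional hβ
  rw [adjoin_union, ι.adjoin_range_eq_fieldRange]
  infer_instance

theorem IntermediateField.finrank_adjoin_range_union_singleton_le (ι : L →ₐ[K] E) {β : E}
    {p : K[X]} (hp : p ≠ 0) (hβ : aeval β p = 0) :
    finrank K (adjoin K (Set.range ι ∪ {β})) ≤ finrank K L * p.natDegree := by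
  have hint : IsIntegral K β := isAlgebraic_iff_isIntegral.1 ⟨p, hp, hβ⟩
  rw [adjoin_union, ι.adjoin_range_eq_fieldRange]
  calc finrank K ↥(ι.fieldRange ⊔ K⟮β⟯)
      ≤ finrank K ι.fieldRange * finrank K K⟮β⟯ := finrank_sup_le _ _
    _ = finrank K L * (minpoly K β).natDegree := by
      have hrange : finrank K ι.fieldRange = finrank K L :=
        (AlgEquiv.ofInjectiveField ι).symm.toLinearEquiv.finrank_eq
      rw [adjoin.finrank hint, hrange]
    _ ≤ finrank K L * p.natDegree :=
      Nat.mul_le_mul_left _ (natDegree_le_of_dvd (minpoly.dvd K β hβ) hp)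

end AdjoinRangeUnionSingleton

theorem IntermediateField.exists_map_eq_sub_pow {k : Type*} [Field k] (ι : k →+* ℂ) (β : ℂ)
    (φ : adjoin ℚ (Set.range ι ∪ {β}) →ₐ[ℚ] ℂ) {x : adjoin ℚ (Set.range ι ∪ {β})} {t : k}
    {m : ℕ} (hx : (x : ℂ) = ι t - β ^ m) :
    ∃ ρ : k →+* ℂ, ∃ w : ℂ, (∀ p : ℚ[X], aeval β p = 0 → aeval w p = 0) ∧
      φ x = ρ t - w ^ m := by
  have hι : ∀ s, ι s ∈ adjoin ℚ (Set.range ι ∪ {β}) := fun s => subset_adjoin _ _ (.inl ⟨s, rfl⟩)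
  set z : adjoin ℚ (Set.range ι ∪ {β}) := ⟨β, subset_adjoin _ _ (.inr rfl)⟩
  refine ⟨(φ : adjoin ℚ (Set.range ι ∪ {β}) →+* ℂ).comp (ι.codRestrict _ hι), φ z,
    fun p hp => ?_, ?_⟩
  · rw [aeval_algHom_apply, show aeval z p = 0 from Subtype.ext ((aeval_coe _ z p).symm.trans hp),
      map_zero]
  · rw [show x = ι.codRestrict _ hι t - z ^ m from Subtype.ext hx, map_sub, map_pow]
    rfl

theorem abs_algebraNorm_le_pow_finrank {F : Type*} [Field F] [Algebra ℚ F]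
    [FiniteDimensional ℚ F] {x : F} {C : ℝ} (hC : ∀ φ : F →ₐ[ℚ] ℂ, ‖φ x‖ ≤ C) :
    |(Algebra.norm ℚ x : ℝ)| ≤ C ^ finrank ℚ F := by
  calc |(Algebra.norm ℚ x : ℝ)| = ‖algebraMap ℚ ℂ (Algebra.norm ℚ x)‖ := by simp
    _ = ∏ φ : F →ₐ[ℚ] ℂ, ‖φ x‖ := by rw [Algebra.norm_eq_prod_embeddings, norm_prod]
    _ ≤ ∏ _φ : F →ₐ[ℚ] ℂ, C := Finset.prod_le_prod (fun _ _ => norm_nonneg _) fun φ _ => hC φ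
    _ = C ^ finrank ℚ F := by rw [Finset.prod_const, Finset.card_univ, AlgHom.card]

namespace NumberField

variable {k : Type*} [Field k] [NumberField k]

theorem abs_norm_eq_absNorm_span_singleton (α : 𝓞 k) :
    |(Algebra.norm ℚ (α : k) : ℝ)| = Ideal.absNorm (Ideal.span {α}) := by
  rw [Ideal.absNorm_span_singleton, ← Algebra.coe_norm_int]
  push_cast
  rw [Nat.cast_natAbs, Int.cast_abs]

variable [IsGalois ℚ k]

theorem bijective_comp_algEquiv (ρ : k →+* ℂ) :
    Function.Bijective fun σ : k ≃ₐ[ℚ] k => ρ.comp (σ : k →+* k) := by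
  rw [Fintype.bijective_iff_injective_and_card, NumberField.Embeddings.card k ℂ,
    ← Nat.card_eq_fintype_card, IsGalois.card_aut_eq_finrank]
  exact ⟨fun σ₁ σ₂ h => AlgEquiv.ext fun t => ρ.injective (RingHom.congr_fun h t), rfl⟩

theorem norm_map_prod_pow_le (ρ : k →+* ℂ) (α : k) {a : (k ≃ₐ[ℚ] k) → ℕ} {m : ℕ}
    (ha : ∀ σ, a σ ≤ m) :
    ‖ρ (∏ σ : k ≃ₐ[ℚ] k, σ α ^ a σ)‖ ≤ (∏ τ : k →+* ℂ, max 1 ‖τ α‖) ^ m := by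
  rw [map_prod, norm_prod, ← Fintype.prod_bijective _ (bijective_comp_algEquiv ρ) _ _
    fun σ => rfl, ← Finset.prod_pow]
  refine Finset.prod_le_prod (fun _ _ => norm_nonneg _) fun σ _ => ?_
  rw [map_pow, norm_pow]
  calc ‖ρ (σ α)‖ ^ a σ ≤ max 1 ‖ρ (σ α)‖ ^ a σ := by gcongr; exact le_max_right _ _
    _ ≤ max 1 ‖ρ (σ α)‖ ^ m := pow_le_pow_right₀ (le_max_left _ _) (ha σ)

theorem norm_map_prod_pow_le_absNorm_pow (ρ : k →+* ℂ) {I : Ideal (𝓞 k)} {h : ℕ} {α : 𝓞 k}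
    (hgen : I ^ h = Ideal.span {α}) {E : ℝ}
    (hht : ∏ τ : k →+* ℂ, max 1 ‖τ (α : k)‖ ≤ |(Algebra.norm ℚ (α : k) : ℝ)| * E ^ finrank ℚ k)
    {a : (k ≃ₐ[ℚ] k) → ℕ} {m : ℕ} (ha : ∀ σ, a σ ≤ m) :
    ‖ρ (∏ σ : k ≃ₐ[ℚ] k, σ (α : k) ^ a σ)‖ ≤
      (Ideal.absNorm I : ℝ) ^ (m * h) * E ^ (m * finrank ℚ k) := calc
  _ ≤ (∏ τ : k →+* ℂ, max 1 ‖τ (α : k)‖) ^ m := norm_map_prod_pow_le ρ α ha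
  _ ≤ (|(Algebra.norm ℚ (α : k) : ℝ)| * E ^ finrank ℚ k) ^ m := by gcongr
  _ = (Ideal.absNorm I : ℝ) ^ (m * h) * E ^ (m * finrank ℚ k) := by
    rw [abs_norm_eq_absNorm_span_singleton, ← hgen, map_pow, Nat.cast_pow, mul_pow, ← pow_mul,
      ← pow_mul, mul_comm h, mul_comm (finrank ℚ k)]

end NumberField

theorem abs_norm_sub_le_general (k : Type*) [Field k] [NumberField k] [IsGalois ℚ k]
    (ι : k →+* ℂ) (𝔮 : Ideal (NumberField.RingOfIntegers k)) (hp0 : 𝔮 ≠ ⊥)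
    (h : ℕ) (E : ℝ)
    (α : NumberField.RingOfIntegers k) (hgen : 𝔮 ^ h = Ideal.span {α})
    (hht : ∏ τ : k →+* ℂ, max 1 ‖τ (α : k)‖ ≤
      |(Algebra.norm ℚ (α : k) : ℝ)| * E ^ Module.finrank ℚ k)
    (a : (k ≃ₐ[ℚ] k) → ℕ) (ha : ∀ σ, a σ ∈ ({0, 8, 12, 16, 24} : Set ℕ))
    (b : ℤ) (hb : b ^ 2 ≤ 4 * (Ideal.absNorm 𝔮 : ℤ)) (β : ℂ)
    (hβ : β ^ 2 + (b : ℂ) * β + (Ideal.absNorm 𝔮 : ℂ) = 0)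
    (x : IntermediateField.adjoin ℚ (Set.range ι ∪ {β}))
    (hx : (x : ℂ) = ι (∏ σ : k ≃ₐ[ℚ] k, σ (α : k) ^ a σ) - β ^ (24 * h)) :
    |(Algebra.norm ℚ x : ℝ)| ≤
      ((Ideal.absNorm 𝔮 : ℝ) ^ (24 * h) * E ^ (24 * Module.finrank ℚ k) +
        (Ideal.absNorm 𝔮 : ℝ) ^ (12 * h)) ^ (2 * Module.finrank ℚ k) := by
  set q := Ideal.absNorm 𝔮
  set n := finrank ℚ k
  set p : ℚ[X] := X ^ 2 + C (b : ℚ) * X + C (q : ℚ)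
  have hpdeg : p.natDegree = 2 := by unfold p; compute_degree!
  have hp : p ≠ 0 := ne_zero_of_natDegree_gt (n := 0) (by omega)
  have hpβ : aeval β p = 0 := by simpa [p] using hβ
  have : FiniteDimensional ℚ (adjoin ℚ (Set.range ι ∪ {β})) :=
    finiteDimensional_adjoin_range_union_singleton ι.toRatAlgHom
      (isAlgebraic_iff_isIntegral.1 ⟨p, hp, hpβ⟩)
  have hq : (1 : ℝ) ≤ q := Nat.one_le_cast.2 <| Nat.one_le_iff_ne_zero.2 <|
    (Ideal.absNorm_eq_zero_iff.not).2 hp0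
  have hC : 1 ≤ (q : ℝ) ^ (24 * h) * E ^ (24 * n) + (q : ℝ) ^ (12 * h) := by
    have : 0 ≤ (q : ℝ) ^ (24 * h) * E ^ (24 * n) := by rw [pow_mul E]; positivity
    linarith [one_le_pow₀ (n := 12 * h) hq]
  have ha24 : ∀ σ, a σ ≤ 24 := fun σ => by
    have := ha σ
    simp only [Set.mem_insert_iff, Set.mem_singleton_iff] at this
    omega
  refine (abs_algebraNorm_le_pow_finrank fun φ => ?_).trans (pow_le_pow_right₀ hC ?_)
  · obtain ⟨ρ, w, hconj, hφx⟩ := exists_map_eq_sub_pow ι β φ hx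
    have hw : ‖w‖ ^ 2 = q :=
      Complex.norm_sq_eq_of_quadratic_root (b := b) (by exact_mod_cast hb)
        (by simpa [p] using hconj p hpβ)
    have hα := NumberField.norm_map_prod_pow_le_absNorm_pow ρ hgen hht ha24
    calc ‖φ x‖ ≤ ‖ρ (∏ σ : k ≃ₐ[ℚ] k, σ (α : k) ^ a σ)‖ + ‖w‖ ^ (2 * (12 * h)) := by
          rw [hφx, ← norm_pow, show 2 * (12 * h) = 24 * h by ring]; exact norm_sub_le _ _
      _ ≤ (q : ℝ) ^ (24 * h) * E ^ (24 * n) + (q : ℝ) ^ (12 * h) := by rw [pow_mul, hw]; gcongr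
  · calc finrank ℚ (adjoin ℚ (Set.range ι ∪ {β})) ≤ n * p.natDegree :=
          finrank_adjoin_range_union_singleton_le ι.toRatAlgHom hp hpβ
      _ = 2 * n := by rw [hpdeg, mul_comm]

/-- (Proposition 7.5) Let `k` be a number field of degree `n`, Galois over `ℚ`, with a fixed
embedding `ι : k ↪ ℂ`. Let `𝔮` be a nonzero prime ideal of `𝒪_k` of absolute norm `q`,
`h ≥ 1` an integer, `E ≥ 1` a real number, and `α ∈ 𝒪_k` a nonzero element with `𝔮^h = α𝒪_k`
and `∏_τ max(1, |τ(α)|) ≤ |N_{k/ℚ}(α)| ⬝ E^n`. Let `a σ ∈ {0,8,12,16,24}` be integers for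
`σ ∈ Gal(k/ℚ)`, let `b` be an integer with `b² ≤ 4q`, and let `β ∈ ℂ` satisfy
`β² + bβ + q = 0`. Let `F ⊆ ℂ` be the subfield generated over `ℚ` by `ι(k)` and `β`. Then
`|N_{F/ℚ}(ι(∏_σ σ(α)^(a σ)) − β^(24h))| ≤ (q^(24h) E^(24n) + q^(12h))^(2n)`. -/
theorem abs_norm_sub_le (k : Type*) [Field k] [NumberField k] [IsGalois ℚ k]
    (ι : k →+* ℂ) (𝔮 : Ideal (NumberField.RingOfIntegers k)) (hp : 𝔮.IsPrime) (hp0 : 𝔮 ≠ ⊥)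
    (h : ℕ) (hh : 1 ≤ h) (E : ℝ) (hE : 1 ≤ E)
    (α : NumberField.RingOfIntegers k) (hα : α ≠ 0) (hgen : 𝔮 ^ h = Ideal.span {α})
    (hht : ∏ τ : k →+* ℂ, max 1 ‖τ (α : k)‖ ≤
      |(Algebra.norm ℚ (α : k) : ℝ)| * E ^ Module.finrank ℚ k)
    (a : (k ≃ₐ[ℚ] k) → ℕ) (ha : ∀ σ, a σ ∈ ({0, 8, 12, 16, 24} : Set ℕ))
    (b : ℤ) (hb : b ^ 2 ≤ 4 * (Ideal.absNorm 𝔮 : ℤ)) (β : ℂ)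
    (hβ : β ^ 2 + (b : ℂ) * β + (Ideal.absNorm 𝔮 : ℂ) = 0)
    (x : IntermediateField.adjoin ℚ (Set.range ι ∪ {β}))
    (hx : (x : ℂ) = ι (∏ σ : k ≃ₐ[ℚ] k, σ (α : k) ^ a σ) - β ^ (24 * h)) :
    |(Algebra.norm ℚ x : ℝ)| ≤
      ((Ideal.absNorm 𝔮 : ℝ) ^ (24 * h) * E ^ (24 * Module.finrank ℚ k) +
        (Ideal.absNorm 𝔮 : ℝ) ^ (12 * h)) ^ (2 * Module.finrank ℚ k) :=
  abs_norm_sub_le_general k ι 𝔮 hp0 h E α hgen hht a ha b hb β hβ x hx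
end
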